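/- There exists a constant C > 0 (depending only on d, γ and R) such that for every integer n ≥ 1 and all x, y ∈ ℝᵈ with |x| ≤ R and |y| ≤ R, the 2d×2d symmetric matrix B := [[nξ + 2I, −nξ], [−nξ, nξ + 2I]], where ξ := γ|x−y|^{2γ−4}( |x−y|² I + 2(γ−1)(x−y)(x−y)ᵀ ) for x ≠ y and ξ := 0 for x = y, satisfies B + (1/n) B² ≤ C n |x−y|^{2γ−2} [[I, −I], [−I, I]] + C I_{2d} in the Loewner (positive semidefinite) order. -/

import Mathlib

/-
With `D A = diffBlocks A = [[A, -A], [-A, A]]` (that is, `[[1, -1], [-1, 1]] ⊗ A`) one has `B = n D ξ + 2`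
and `D A * D A' = 2 D (A A')`, hence `B + B²/n = (n + 4) D ξ + 2n D (ξ²) + (2 + 4/n)`.
Since `D` preserves positive semidefiniteness, it suffices to show `ξ ≤ λ` and `ξ² ≤ λ²` for
`λ = γ (2γ - 1) |x - y|^{2γ-2}`. Now `ξ = a I + b z zᵀ` with `a, b ≥ 0` and `a + b |z|² = λ`,
its square has the same shape, and for such matrices the bound by `(a + b |z|²) I` is
Cauchy–Schwarz. Finally `λ² ≤ γ (2γ - 1) (2R)^{2γ-2} λ` because `|x - y| ≤ 2R`.
-/

open Set Filter Matrix

noncomputable section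

/-- `ℝᵈ` with the Euclidean norm. -/
abbrev Vec (d : ℕ) := EuclideanSpace ℝ (Fin d)

open scoped Classical

/-- The matrix `ξ = γ |x-y|^{2γ-4} ( |x-y|² I + 2 (γ-1) (x-y)(x-y)ᵀ )` for `x ≠ y`, and `0`
for `x = y`. -/
def xiMat {d : ℕ} (γ : ℝ) (z : Vec d) : Matrix (Fin d) (Fin d) ℝ :=
  if z = 0 then 0
  else (γ * ‖z‖ ^ (2 * γ - 4)) •
    (‖z‖ ^ 2 • (1 : Matrix (Fin d) (Fin d) ℝ) +
      (2 * (γ - 1)) • Matrix.vecMulVec (fun i => z i) (fun j => z j))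

/-- The `2d × 2d` block matrix `B = [[nξ + 2I, -nξ], [-nξ, nξ + 2I]]`. -/
def Bmat {d : ℕ} (γ : ℝ) (n : ℕ) (x y : Vec d) :
    Matrix (Fin d ⊕ Fin d) (Fin d ⊕ Fin d) ℝ :=
  Matrix.fromBlocks
    ((n : ℝ) • xiMat γ (x - y) + (2 : ℝ) • (1 : Matrix (Fin d) (Fin d) ℝ))
    (-((n : ℝ) • xiMat γ (x - y)))
    (-((n : ℝ) • xiMat γ (x - y)))
    ((n : ℝ) • xiMat γ (x - y) + (2 : ℝ) • (1 : Matrix (Fin d) (Fin d) ℝ))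

open scoped MatrixOrder

namespace Matrix

variable {m : Type*}

section RankOnePerturbation

variable [Fintype m] [DecidableEq m]

theorem vecMulVec_self_le_dotProduct_self_smul_one (z : m → ℝ) :
    vecMulVec z z ≤ (z ⬝ᵥ z) • (1 : Matrix m m ℝ) := by
  refine .of_dotProduct_mulVec_nonneg ?_ fun w => ?_
  · exact (isHermitian_one.smul (.all _)).sub (posSemidef_vecMulVec_self_star z).isHermitian
  · have := Finset.sum_mul_sq_le_sq_mul_sq Finset.univ z w
    simp only [star_trivial, sub_mulVec, smul_mulVec, one_mulVec, vecMulVec_mulVec,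
      dotProduct_sub, dotProduct_smul, smul_eq_mul, op_smul_eq_mul]
    simp only [dotProduct, sq, mul_comm (w _)] at *
    linarith

variable {a b : ℝ} (z : m → ℝ)

theorem smul_one_add_smul_vecMulVec_le (hb : 0 ≤ b) :
    a • 1 + b • vecMulVec z z ≤ (a + b * (z ⬝ᵥ z)) • (1 : Matrix m m ℝ) := by
  have h := (le_iff.mp (vecMulVec_self_le_dotProduct_self_smul_one z)).smul hb
  rw [le_iff]
  convert h using 1
  module

theorem smul_one_add_smul_vecMulVec_mul_self :
    (a • 1 + b • vecMulVec z z) * (a • 1 + b • vecMulVec z z) =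
      a ^ 2 • (1 : Matrix m m ℝ) + (2 * a * b + b ^ 2 * (z ⬝ᵥ z)) • vecMulVec z z := by
  simp only [add_mul, mul_add, smul_mul_smul, one_mul, mul_one, vecMulVec_mul_vecMulVec,
    vecMulVec_smul]
  module

theorem smul_one_add_smul_vecMulVec_mul_self_le (ha : 0 ≤ a) (hb : 0 ≤ b) :
    (a • 1 + b • vecMulVec z z) * (a • 1 + b • vecMulVec z z) ≤
      (a + b * (z ⬝ᵥ z)) ^ 2 • (1 : Matrix m m ℝ) := by
  have h := smul_one_add_smul_vecMulVec_le (a := a ^ 2) (b := 2 * a * b + b ^ 2 * (z ⬝ᵥ z)) z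
    (by have := dotProduct_star_self_nonneg z; positivity)
  rw [smul_one_add_smul_vecMulVec_mul_self]
  convert h using 2
  ring

end RankOnePerturbation

variable {α : Type*}

def diffBlocks [Neg α] (A : Matrix m m α) : Matrix (m ⊕ m) (m ⊕ m) α :=
  fromBlocks A (-A) (-A) A

theorem diffBlocks_sub [AddCommGroup α] (A B : Matrix m m α) :
    diffBlocks (A - B) = diffBlocks A - diffBlocks B := by
  ext (_ | _) (_ | _) <;> simp [diffBlocks] <;> abel

theorem diffBlocks_smul {R : Type*} [Monoid R] [AddGroup α] [DistribMulAction R α] (r : R)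
    (A : Matrix m m α) : diffBlocks (r • A) = r • diffBlocks A := by
  simp [diffBlocks, fromBlocks_smul]

variable [Fintype m]

theorem diffBlocks_mul_diffBlocks [Ring α] (A B : Matrix m m α) :
    diffBlocks A * diffBlocks B = 2 • diffBlocks (A * B) := by
  rw [diffBlocks, diffBlocks, diffBlocks, fromBlocks_multiply, two_smul, fromBlocks_add]
  congr 1 <;> noncomm_ring

theorem diffBlocks_eq_conjTranspose_mul_mul [DecidableEq m] [Ring α] [StarRing α]
    (A : Matrix m m α) :
    diffBlocks A =
      (fromCols (1 : Matrix m m α) (-1))ᴴ * A * (fromCols 1 (-1) : Matrix m (m ⊕ m) α) := by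
  rw [conjTranspose_fromCols_eq_fromRows_conjTranspose, fromRows_mul, fromRows_mul_fromCols]
  simp [diffBlocks]

theorem PosSemidef.diffBlocks [DecidableEq m] {A : Matrix m m ℝ} (hA : A.PosSemidef) :
    (diffBlocks A).PosSemidef := by
  rw [diffBlocks_eq_conjTranspose_mul_mul]
  exact hA.conjTranspose_mul_mul_same _

theorem add_one_div_smul_mul_self_le [DecidableEq m] {ξ : Matrix m m ℝ}
    {B : Matrix (m ⊕ m) (m ⊕ m) ℝ} {n : ℕ} (hn : 0 < n) {l K C : ℝ}
    (hB : B = (n : ℝ) • diffBlocks ξ + (2 : ℝ) • 1) (hξ : ξ ≤ l • 1) (hξξ : ξ * ξ ≤ l ^ 2 • 1)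
    (hK : (n + 4) * l + 2 * n * l ^ 2 ≤ K) (hC : 2 + 4 / n ≤ C) :
    B + (1 / n : ℝ) • (B * B) ≤ K • diffBlocks 1 + C • 1 := by
  have hn' : (n : ℝ) ≠ 0 := by positivity
  have hdecomp : K • diffBlocks 1 + C • 1 - (B + (1 / n : ℝ) • (B * B)) =
      (n + 4 : ℝ) • diffBlocks (l • 1 - ξ) + (2 * n : ℝ) • diffBlocks (l ^ 2 • 1 - ξ * ξ) +
        (K - ((n + 4) * l + 2 * n * l ^ 2)) • diffBlocks 1 + (C - (2 + 4 / n)) • 1 := by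
    simp only [hB, diffBlocks_sub, diffBlocks_smul, add_mul, mul_add, smul_mul_smul,
      diffBlocks_mul_diffBlocks, one_mul, mul_smul_one]
    match_scalars <;> field_simp <;> ring
  rw [le_iff, hdecomp]
  refine ((((le_iff.mp hξ).diffBlocks.smul ?_).add ((le_iff.mp hξξ).diffBlocks.smul ?_)).add
    (PosSemidef.one.diffBlocks.smul (sub_nonneg.mpr hK))).add
    (PosSemidef.one.smul (sub_nonneg.mpr hC)) <;> positivity

end Matrix

theorem EuclideanSpace.real_norm_sq_eq_dotProduct {ι : Type*} [Fintype ι]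
    (z : EuclideanSpace ℝ ι) : ‖z‖ ^ 2 = z.ofLp ⬝ᵥ z.ofLp := by
  rw [← real_inner_self_eq_norm_sq, EuclideanSpace.inner_eq_star_dotProduct, star_trivial]

theorem Real.rpow_two_mul_sub_two_eq {x γ : ℝ} (hx : 0 ≤ x) (hγ : 1 < γ) :
    x ^ (2 * γ - 2) = x ^ (2 * γ - 4) * x ^ 2 := by
  rw [Real.rpow_of_add_eq hx (by linarith) (by ring : 2 * γ - 4 + 2 = 2 * γ - 2), Real.rpow_two]

section Xi

variable {d : ℕ} {γ : ℝ}

theorem xiMat_eq (hγ : 1 < γ) (z : Vec d) :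
    xiMat γ z = (γ * ‖z‖ ^ (2 * γ - 2)) • 1 +
      (2 * γ * (γ - 1) * ‖z‖ ^ (2 * γ - 4)) • vecMulVec z.ofLp z.ofLp := by
  rw [xiMat]
  split_ifs with hz
  · simp [hz, Real.zero_rpow (by linarith : 2 * γ - 2 ≠ 0)]
  · rw [smul_add, smul_smul, smul_smul, Real.rpow_two_mul_sub_two_eq (norm_nonneg z) hγ]
    congr 2 <;> ring

theorem xiMat_coeff_eq (hγ : 1 < γ) (z : Vec d) :
    γ * ‖z‖ ^ (2 * γ - 2) + 2 * γ * (γ - 1) * ‖z‖ ^ (2 * γ - 4) * (z.ofLp ⬝ᵥ z.ofLp) =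
      γ * (2 * γ - 1) * ‖z‖ ^ (2 * γ - 2) := by
  rw [← EuclideanSpace.real_norm_sq_eq_dotProduct,
    Real.rpow_two_mul_sub_two_eq (norm_nonneg z) hγ]
  ring

theorem xiMat_le (hγ : 1 < γ) (z : Vec d) :
    xiMat γ z ≤ (γ * (2 * γ - 1) * ‖z‖ ^ (2 * γ - 2)) • 1 := by
  rw [xiMat_eq hγ, ← xiMat_coeff_eq hγ]
  exact smul_one_add_smul_vecMulVec_le _ (by have := hγ.le; positivity)

theorem xiMat_mul_self_le (hγ : 1 < γ) (z : Vec d) :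
    xiMat γ z * xiMat γ z ≤ (γ * (2 * γ - 1) * ‖z‖ ^ (2 * γ - 2)) ^ 2 • 1 := by
  rw [xiMat_eq hγ, ← xiMat_coeff_eq hγ]
  exact smul_one_add_smul_vecMulVec_mul_self_le _ (by have := hγ.le; positivity)
    (by have := hγ.le; positivity)

end Xi

theorem Bmat_eq {d : ℕ} (γ : ℝ) (n : ℕ) (x y : Vec d) :
    Bmat γ n x y = (n : ℝ) • diffBlocks (xiMat γ (x - y)) + (2 : ℝ) • 1 := by
  rw [Bmat, diffBlocks, ← fromBlocks_one, fromBlocks_smul, fromBlocks_smul, fromBlocks_add]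
  simp

theorem block_matrix_bound_general
    {d : ℕ} (γ R : ℝ) (hγ : 2 ≤ γ) (hR : 0 < R) :
    ∃ C > (0:ℝ), ∀ (n : ℕ), 1 ≤ n → ∀ x y : Vec d, ‖x‖ ≤ R → ‖y‖ ≤ R →
      ((C * (n : ℝ) * ‖x - y‖ ^ (2 * γ - 2)) •
          Matrix.fromBlocks (1 : Matrix (Fin d) (Fin d) ℝ) (-1) (-1) 1 +
        C • (1 : Matrix (Fin d ⊕ Fin d) (Fin d ⊕ Fin d) ℝ) -
        (Bmat γ n x y + ((1 : ℝ) / (n : ℝ)) • (Bmat γ n x y * Bmat γ n x y))).PosSemidef := by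
  set c := γ * (2 * γ - 1)
  set β := (2 * R) ^ (2 * γ - 2)
  have hc : 0 ≤ c := mul_nonneg (by linarith) (by linarith)
  have hβ : 0 ≤ β := by positivity
  refine ⟨6 + 5 * c + 2 * c ^ 2 * β, by positivity, fun n hn x y hx hy => ?_⟩
  set α := ‖x - y‖ ^ (2 * γ - 2)
  have hα : 0 ≤ α := by positivity
  have hαβ : α ≤ β :=
    Real.rpow_le_rpow (norm_nonneg _) ((norm_sub_le x y).trans (by linarith)) (by linarith)
  have hn' : (1 : ℝ) ≤ n := by exact_mod_cast hn
  refine add_one_div_smul_mul_self_le hn (Bmat_eq γ n x y) (xiMat_le (by linarith) _)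
    (xiMat_mul_self_le (by linarith) _) ?_ ?_
  · have hgap : 0 ≤ 6 * n + 4 * c * (n - 1) + 2 * c ^ 2 * n * (β - α) := by
      have := sub_nonneg.mpr hn'
      have := sub_nonneg.mpr hαβ
      positivity
    linarith [mul_nonneg hα hgap]
  · have : 4 / (n : ℝ) ≤ 4 := div_le_self (by norm_num) hn'
    have : 0 ≤ 5 * c + 2 * c ^ 2 * β := by positivity
    linarith

/-- There is a constant `C > 0` (depending only on `d`, `γ`, `R`) such
that for all `n ≥ 1` and `x, y` in the ball of radius `R`,
`B + (1/n) B² ≤ C n |x-y|^{2γ-2} [[I, -I], [-I, I]] + C I_{2d}` in the Loewner order. -/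
theorem block_matrix_bound
    {d : ℕ} (hd : 1 ≤ d) (γ R : ℝ) (hγ : 2 ≤ γ) (hR : 0 < R) :
    ∃ C > (0:ℝ), ∀ (n : ℕ), 1 ≤ n → ∀ x y : Vec d, ‖x‖ ≤ R → ‖y‖ ≤ R →
      ((C * (n : ℝ) * ‖x - y‖ ^ (2 * γ - 2)) •
          Matrix.fromBlocks (1 : Matrix (Fin d) (Fin d) ℝ) (-1) (-1) 1 +
        C • (1 : Matrix (Fin d ⊕ Fin d) (Fin d ⊕ Fin d) ℝ) -
        (Bmat γ n x y + ((1 : ℝ) / (n : ℝ)) • (Bmat γ n x y * Bmat γ n x y))).PosSemidef :=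
  block_matrix_bound_general γ R hγ hR
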